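/- arXiv:2407.04037 — 3 statements merged into one kernel-verified Lean document; each statement's English description precedes it below -/
import Mathlib

section
/- Let H be a graph with distinguished vertices c and d such that neither {c} nor {d} is a feedback vertex set of H. Then the edge-gadget reduction given by H (replacing each edge (u,v) of a graph G by a copy of H with u identified with c and v identified with d) is not a correct reduction from k-VertexCover to k-FeedbackVertexSet: in particular, the path with 2k+1 vertices has a vertex cover of size k, but its image under the edge-gadget map has no feedback vertex set of size at most k. -/
open SimpleGraph

/-- A vertex cover: a set of vertices meeting every edge. -/
def IsVertexCover {V : Type*} (G : SimpleGraph V) (U : Set V) : Prop :=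
  ∀ ⦃u v⦄, G.Adj u v → u ∈ U ∨ v ∈ U

/-- A feedback vertex set: a set of vertices whose removal leaves an acyclic graph. -/
def IsFVS {V : Type*} (G : SimpleGraph V) (U : Set V) : Prop :=
  (G.induce Uᶜ).IsAcyclic

/-- The vertex type of the edge-gadget image of `G`: the original vertices plus, for each
(oriented) edge of `G`, a fresh copy of the interior of the gadget graph `H`. -/
def EGVert {V W : Type*} [LinearOrder V] (G : SimpleGraph V) (c d : W) : Type _ :=
  V ⊕ ({p : V × V // G.Adj p.1 p.2 ∧ p.1 < p.2} × {w : W // w ≠ c ∧ w ≠ d})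

/-- Base adjacency relation for the edge-gadget construction: each edge `(u,v)` of `G`
(with `u < v`) is replaced by a fresh copy of `H`, identifying `u` with `c` and `v` with `d`. -/
def egBase {V W : Type*} [LinearOrder V] (G : SimpleGraph V) (H : SimpleGraph W) (c d : W)
    (x y : EGVert G c d) : Prop :=
  (∃ e : {p : V × V // G.Adj p.1 p.2 ∧ p.1 < p.2},
      x = Sum.inl e.1.1 ∧ y = Sum.inl e.1.2 ∧ H.Adj c d) ∨
  (∃ (e : {p : V × V // G.Adj p.1 p.2 ∧ p.1 < p.2}) (w : {w : W // w ≠ c ∧ w ≠ d}),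
      x = Sum.inl e.1.1 ∧ y = Sum.inr (e, w) ∧ H.Adj c w.1) ∨
  (∃ (e : {p : V × V // G.Adj p.1 p.2 ∧ p.1 < p.2}) (w : {w : W // w ≠ c ∧ w ≠ d}),
      x = Sum.inl e.1.2 ∧ y = Sum.inr (e, w) ∧ H.Adj d w.1) ∨
  (∃ (e : {p : V × V // G.Adj p.1 p.2 ∧ p.1 < p.2}) (w w' : {w : W // w ≠ c ∧ w ≠ d}),
      x = Sum.inr (e, w) ∧ y = Sum.inr (e, w') ∧ H.Adj w.1 w'.1)

/-- The edge-gadget image of `G`: every edge of `G` is replaced by a disjoint copy of `H`,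
identifying the endpoints with the distinguished vertices `c` and `d` of `H`. -/
def edgeGadget {V W : Type*} [LinearOrder V] (G : SimpleGraph V) (H : SimpleGraph W)
    (c d : W) : SimpleGraph (EGVert G c d) where
  Adj x y := egBase G H c d x y ∨ egBase G H c d y x
  symm := ⟨fun x y h => h.symm⟩
  loopless := by
    refine ⟨fun x h => ?_⟩
    have : egBase G H c d x x := by rcases h with h | h <;> exact h
    rcases this with ⟨e, h1, h2, _⟩ | ⟨e, w, h1, h2, _⟩ | ⟨e, w, h1, h2, _⟩
      | ⟨e, w, w', h1, h2, hadj⟩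
    · rw [h1] at h2
      exact absurd (Sum.inl_injective h2) (ne_of_lt e.2.2)
    · rw [h1] at h2; exact Sum.inl_ne_inr h2
    · rw [h1] at h2; exact Sum.inl_ne_inr h2
    · rw [h1] at h2
      obtain ⟨-, h⟩ := Prod.mk.injEq _ _ _ _ ▸ Sum.inr_injective h2
      exact H.loopless.irrefl _ (by rwa [h] at hadj)

/-!
For each edge `{i, i + 1}` of the path, the vertex `i` together with the interior of the `i`-th
gadget spans a copy of `H - d`, which contains a cycle. These `2k` copies are pairwise disjoint,
so every feedback vertex set of the image has at least `2k > k` vertices, while the `k` odd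
vertices of the path cover all its edges.
-/

section

variable {V W : Type*}

theorem IsFVS.mono {G : SimpleGraph V} {S T : Set V} (hS : IsFVS G S) (hST : S ⊆ T) :
    IsFVS G T :=
  IsAcyclic.embedding (G.induceHomOfLE (Set.compl_subset_compl.mpr hST)) hS

theorem IsFVS.comap {G : SimpleGraph V} {G' : SimpleGraph W} (f : G →g G')
    (hf : Function.Injective f) {U : Set W} (hU : IsFVS G' U) : IsFVS G (f ⁻¹' U) :=
  IsAcyclic.comap (induceHom f (Set.mapsTo_preimage f Uᶜ)) (induceHom_injective f _ hf.injOn) hU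

theorem exists_isVertexCover_pathGraph (k : ℕ) :
    ∃ U : Finset (Fin (2 * k + 1)), U.card = k ∧
      _root_.IsVertexCover (pathGraph (2 * k + 1)) ↑U := by
  let odd : Fin k ↪ Fin (2 * k + 1) :=
    ⟨fun i => ⟨2 * i + 1, by omega⟩, fun i j h => Fin.ext (by simpa using h)⟩
  refine ⟨Finset.univ.map odd, by simp, fun u v huv => ?_⟩
  have hodd (x : Fin (2 * k + 1)) (hx : x.val % 2 = 1) : x ∈ (Finset.univ.map odd : Set _) := by
    simp only [Finset.coe_map, Finset.coe_univ, Set.image_univ, Set.mem_range]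
    exact ⟨⟨x / 2, by omega⟩, Fin.ext (show 2 * (x.val / 2) + 1 = x.val by omega)⟩
  rw [pathGraph_adj] at huv
  rcases Nat.mod_two_eq_zero_or_one u with hu | hu
  · exact .inr (hodd v (by omega))
  · exact .inl (hodd u hu)

namespace EGVert

variable [LinearOrder V] {G : SimpleGraph V} {c d : W}

/-- The index `i` of the copy of `H - d` (vertex `i` plus the interior of the gadget of the edge
`i < j`) that contains `x`. -/
def anchor : EGVert G c d → V :=
  Sum.elim id fun x => x.1.1.1

open Classical in
noncomputable def gadgetCopy {u v : V} (huv : G.Adj u v) (hlt : u < v) : W → EGVert G c d :=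
  fun w => if hc : w = c then .inl u else if hd : w = d then .inl v
    else .inr (⟨(u, v), huv, hlt⟩, ⟨w, hc, hd⟩)

variable {H : SimpleGraph W} {u v : V}

section

variable (huv : G.Adj u v) (hlt : u < v)

theorem gadgetCopy_cases (w : W) :
    (w = c ∧ gadgetCopy (c := c) (d := d) huv hlt w = .inl u) ∨
    (w = d ∧ w ≠ c ∧ gadgetCopy (c := c) (d := d) huv hlt w = .inl v) ∨
    ∃ h : w ≠ c ∧ w ≠ d,
      gadgetCopy huv hlt w = .inr (⟨(u, v), huv, hlt⟩, ⟨w, h⟩) := by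
  by_cases hc : w = c
  · exact .inl ⟨hc, dif_pos hc⟩
  by_cases hd : w = d
  · exact .inr (.inl ⟨hd, hc, (dif_neg hc).trans (dif_pos hd)⟩)
  · exact .inr (.inr ⟨⟨hc, hd⟩, (dif_neg hc).trans (dif_neg hd)⟩)

theorem gadgetCopy_adj {a b : W} (hab : H.Adj a b) :
    (edgeGadget G H c d).Adj (gadgetCopy huv hlt a) (gadgetCopy huv hlt b) := by
  rcases gadgetCopy_cases (c := c) (d := d) huv hlt a with
    ⟨ha', ha⟩ | ⟨ha', -, ha⟩ | ⟨_, ha⟩ <;>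
  rcases gadgetCopy_cases (c := c) (d := d) huv hlt b with
    ⟨hb', hb⟩ | ⟨hb', -, hb⟩ | ⟨_, hb⟩ <;>
  rw [ha, hb] <;> subst_vars
  · exact absurd hab (H.loopless.irrefl _)
  · exact .inl (.inl ⟨⟨(u, v), huv, hlt⟩, rfl, rfl, hab⟩)
  · exact .inl (.inr (.inl ⟨_, _, rfl, rfl, hab⟩))
  · exact .inr (.inl ⟨⟨(u, v), huv, hlt⟩, rfl, rfl, hab.symm⟩)
  · exact absurd hab (H.loopless.irrefl _)
  · exact .inl (.inr (.inr (.inl ⟨_, _, rfl, rfl, hab⟩)))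
  · exact .inr (.inr (.inl ⟨_, _, rfl, rfl, hab.symm⟩))
  · exact .inr (.inr (.inr (.inl ⟨_, _, rfl, rfl, hab.symm⟩)))
  · exact .inl (.inr (.inr (.inr ⟨_, _, _, rfl, rfl, hab⟩)))

theorem gadgetCopy_injective : Function.Injective (gadgetCopy (c := c) (d := d) huv hlt) := by
  intro a b hab
  rcases gadgetCopy_cases (c := c) (d := d) huv hlt a with
    ⟨ha', ha⟩ | ⟨ha', -, ha⟩ | ⟨_, ha⟩ <;>
  rcases gadgetCopy_cases (c := c) (d := d) huv hlt b with
    ⟨hb', hb⟩ | ⟨hb', -, hb⟩ | ⟨_, hb⟩ <;>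
  rw [ha, hb] at hab
  · exact ha'.trans hb'.symm
  · exact absurd (Sum.inl_injective hab) hlt.ne
  · exact absurd hab Sum.inl_ne_inr
  · exact absurd (Sum.inl_injective hab) hlt.ne'
  · exact ha'.trans hb'.symm
  · exact absurd hab Sum.inl_ne_inr
  · exact absurd hab Sum.inr_ne_inl
  · exact absurd hab Sum.inr_ne_inl
  · exact congrArg (fun x => x.2.1) (Sum.inr_injective hab)

theorem anchor_gadgetCopy {w : W} (hw : w ≠ d) :
    anchor (gadgetCopy (c := c) (d := d) huv hlt w) = u := by
  rcases gadgetCopy_cases (c := c) (d := d) huv hlt w with ⟨-, h⟩ | ⟨hwd, -⟩ | ⟨_, h⟩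
  · rw [h]; rfl
  · exact absurd hwd hw
  · rw [h]; rfl

end

theorem exists_mem_anchor_eq_of_isFVS (hd : ¬ IsFVS H {d}) (huv : G.Adj u v) (hlt : u < v)
    {U : Set (EGVert G c d)} (hU : IsFVS (edgeGadget G H c d) U) : ∃ x ∈ U, anchor x = u := by
  by_contra! hmiss
  refine hd ((hU.comap ⟨gadgetCopy huv hlt, gadgetCopy_adj huv hlt⟩
    (gadgetCopy_injective huv hlt)).mono fun w hw => ?_)
  by_contra hwd
  exact hmiss _ hw (anchor_gadgetCopy huv hlt hwd)

end EGVert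

end

theorem stmt_3_general {W : Type*} (H : SimpleGraph W) (c d : W)
    (hd : ¬ IsFVS H {d}) (k : ℕ) (hk : 1 ≤ k) :
    (∃ U : Finset (Fin (2 * k + 1)), U.card = k ∧ _root_.IsVertexCover (pathGraph (2 * k + 1)) ↑U) ∧
    ¬ ∃ U : Finset (EGVert (pathGraph (2 * k + 1)) c d),
        U.card ≤ k ∧ IsFVS (edgeGadget (pathGraph (2 * k + 1)) H c d) ↑U := by
  classical
  refine ⟨exists_isVertexCover_pathGraph k, ?_⟩
  rintro ⟨U, hcard, hU⟩
  have hcover : Finset.univ.erase (Fin.last (2 * k)) ⊆ U.image EGVert.anchor := by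
    intro i hi
    obtain ⟨j, rfl⟩ := Fin.exists_castSucc_eq.mpr (Finset.ne_of_mem_erase hi)
    obtain ⟨x, hx, hxj⟩ := EGVert.exists_mem_anchor_eq_of_isFVS hd
      (pathGraph_adj.mpr (.inl rfl)) Fin.castSucc_lt_succ hU
    exact Finset.mem_image.mpr ⟨x, hx, hxj⟩
  have h2k := (Finset.card_le_card hcover).trans Finset.card_image_le
  rw [Finset.card_erase_of_mem (Finset.mem_univ _), Finset.card_univ, Fintype.card_fin] at h2k
  omega

theorem stmt_3 {W : Type*} (H : SimpleGraph W) (c d : W) (hcd : c ≠ d)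
    (hc : ¬ IsFVS H {c}) (hd : ¬ IsFVS H {d}) (k : ℕ) (hk : 1 ≤ k) :
    (∃ U : Finset (Fin (2 * k + 1)), U.card = k ∧ _root_.IsVertexCover (pathGraph (2 * k + 1)) ↑U) ∧
    ¬ ∃ U : Finset (EGVert (pathGraph (2 * k + 1)) c d),
        U.card ≤ k ∧ IsFVS (edgeGadget (pathGraph (2 * k + 1)) H c d) ↑U :=
  stmt_3_general H c d hd k hk
end

section
/- Let H be a graph with distinguished vertices c ≠ d such that {c} and {d} are feedback vertex sets of H and ∅ is not. For any graph G and any feedback vertex set U* of ρ_H(G) (the edge-gadget image of G), there exists a feedback vertex set U of ρ_H(G) with |U| ≤ |U*| such that U contains only original vertices of G (images of vertices of G), and such a U is a vertex cover of G. -/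
open SimpleGraph

/-! A feedback vertex set of `ρ_H(G)` meets every gadget copy, since each copy contains a cycle
of `H`. Moving each chosen vertex of a copy to the endpoint `u` of its edge `(u, v)` gives a set
of original vertices, no larger, that still meets every copy, i.e. a vertex cover of `G`.

Conversely a vertex cover `U` of `G` is a feedback vertex set of `ρ_H(G)`. A cycle avoiding `U`
cannot consist of original vertices only, so it enters the interior of some copy; at most one
endpoint of that copy survives, so the cycle is trapped in the copy, hence is a cycle of `H`.
But every cycle of `H` passes through both `c` and `d`, i.e. through both endpoints. -/

namespace SimpleGraph

variable {α β : Type*} {X : SimpleGraph α} {Y : SimpleGraph β}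

lemma Walk.IsCycle.induce {s : Set α} {v : α} {p : X.Walk v v} (hp : p.IsCycle)
    (hs : ∀ x ∈ p.support, x ∈ s) : (p.induce s hs).IsCycle := by
  rwa [← Walk.isCycle_map_iff_of_injective (f := (Embedding.induce (G := X) s).toHom)
    (Embedding.induce (G := X) s).injective, Walk.map_induce]

lemma Walk.mem_support_of_sole_exit {s T : Set α} {a : α}
    (hs : ∀ x ∈ s, ∀ y ∈ T, X.Adj x y → y ∈ s ∨ y = a) {x z : α} (r : X.Walk x z)
    (hT : ∀ y ∈ r.support, y ∈ T) (hx : x ∈ s) (hz : z ∉ s) : a ∈ r.support := by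
  obtain ⟨dart, hdart, hfst, hsnd⟩ := r.exists_boundary_dart s hx hz
  have hmem := r.dart_snd_mem_support_of_mem_darts hdart
  rcases hs _ hfst _ (hT _ hmem) dart.adj with h | h
  · exact absurd h hsnd
  · rwa [← h]

/-- Both arcs of the cycle from `s` to a vertex outside `insert a s` would pass through `a`. -/
lemma Walk.IsCycle.support_subset_insert {s T : Set α} {a : α} (ha : a ∉ s)
    (hs : ∀ x ∈ s, ∀ y ∈ T, X.Adj x y → y ∈ s ∨ y = a) {v : α} {p : X.Walk v v}
    (hp : p.IsCycle) (hT : ∀ y ∈ p.support, y ∈ T) {x : α} (hxp : x ∈ p.support)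
    (hxs : x ∈ s) : ∀ z ∈ p.support, z ∈ insert a s := by
  classical
  intro z hz
  by_contra hza
  rw [Set.mem_insert_iff, not_or] at hza
  set q := p.rotate x hxp
  have hq : q.IsCycle := hp.rotate hxp
  have hqT : ∀ y ∈ q.support, y ∈ T := fun y hy => hT y ((p.mem_support_rotate_iff _ _).1 hy)
  have hzq : z ∈ q.support := (p.mem_support_rotate_iff _ _).2 hz
  have h₁ : a ∈ (q.takeUntil z hzq).support :=
    Walk.mem_support_of_sole_exit hs _
      (fun y hy => hqT y (q.support_takeUntil_subset_support hzq hy)) hxs hza.2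
  have h₂ : a ∈ (q.dropUntil z hzq).support.tail := by
    have := Walk.mem_support_of_sole_exit hs (q.dropUntil z hzq).reverse
      (fun y hy => hqT y (q.support_dropUntil_subset_support hzq (by simpa using hy))) hxs hza.2
    rw [Walk.support_reverse, List.mem_reverse, ← Walk.cons_tail_support] at this
    exact (List.mem_cons.1 this).resolve_left (Ne.symm hza.1)
  have hcount := hq.count_support_of_mem ((q.support_takeUntil_subset_support hzq) h₁)
    (fun h => ha (h ▸ hxs))
  rw [← q.take_spec hzq, Walk.support_append, List.count_append] at hcount
  have := List.count_pos_iff.2 h₁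
  have := List.count_pos_iff.2 h₂
  omega

lemma Walk.IsCycle.exists_isCycle_of_support_subset_range (φ : Y ↪g X) {v : α}
    {p : X.Walk v v} (hp : p.IsCycle) (hφ : ∀ x ∈ p.support, x ∈ Set.range φ) :
    ∃ (u : β) (q : Y.Walk u u), q.IsCycle ∧ ∀ k ∈ q.support, φ k ∈ p.support := by
  let e := Equiv.ofInjective φ φ.injective
  let ψ : X.induce (Set.range φ) →g Y :=
    ⟨e.symm, fun {x y} hxy => by
      rw [← φ.map_adj_iff, Equiv.apply_ofInjective_symm φ.injective,
        Equiv.apply_ofInjective_symm φ.injective]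
      exact hxy⟩
  refine ⟨_, (p.induce _ hφ).map ψ, (hp.induce hφ).map e.symm.injective, fun k hk => ?_⟩
  rw [Walk.support_map, Walk.support_induce, List.mem_map] at hk
  obtain ⟨y, hy, rfl⟩ := hk
  rw [List.mem_attachWith] at hy
  simpa [ψ, e, Equiv.apply_ofInjective_symm φ.injective] using hy

end SimpleGraph

lemma isFVS_iff_forall_isCycle {α : Type*} {X : SimpleGraph α} {U : Set α} :
    IsFVS X U ↔ ∀ (v : α) (p : X.Walk v v), p.IsCycle → ∃ x ∈ p.support, x ∈ U := by
  constructor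
  · intro h v p hp
    by_contra! hU
    exact h _ (hp.induce hU)
  · intro h v q hq
    obtain ⟨x, hx, hxU⟩ := h _ _ (hq.map (f := (Embedding.induce (G := X) Uᶜ).toHom)
      (Embedding.induce (G := X) Uᶜ).injective)
    rw [Walk.support_map, List.mem_map] at hx
    obtain ⟨y, -, rfl⟩ := hx
    exact y.2 hxU

section EdgeGadget

variable {V W : Type*} [LinearOrder V] {G : SimpleGraph V} {H : SimpleGraph W} {c d : W}

abbrev GadgetEdge (G : SimpleGraph V) : Type _ := {p : V × V // G.Adj p.1 p.2 ∧ p.1 < p.2}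

-- Stated at type `EGVert G c d`, which `simp` does not see through to the sum type.
@[simp]
lemma EGVert.inl_inj {u v : V} : @Eq (EGVert G c d) (.inl u) (.inl v) ↔ u = v :=
  Sum.inl_injective.eq_iff

@[simp]
lemma EGVert.inr_inj {x y : GadgetEdge G × {w : W // w ≠ c ∧ w ≠ d}} :
    @Eq (EGVert G c d) (.inr x) (.inr y) ↔ x = y :=
  Sum.inr_injective.eq_iff

lemma exists_gadgetEdge_of_adj {u v : V} (h : G.Adj u v) :
    ∃ e : GadgetEdge G, (e.1.1 = u ∧ e.1.2 = v) ∨ (e.1.1 = v ∧ e.1.2 = u) := by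
  rcases lt_or_gt_of_ne h.ne with huv | hvu
  · exact ⟨⟨(u, v), h, huv⟩, Or.inl ⟨rfl, rfl⟩⟩
  · exact ⟨⟨(v, u), h.symm, hvu⟩, Or.inr ⟨rfl, rfl⟩⟩

@[simp]
lemma edgeGadget_adj_inl_inl {u v : V} :
    (edgeGadget G H c d).Adj (Sum.inl u) (Sum.inl v) ↔ G.Adj u v ∧ H.Adj c d := by
  simp only [edgeGadget, egBase, EGVert, Sum.inl.injEq, reduceCtorEq, false_and, and_false,
    exists_false, or_false]
  constructor
  · rintro (⟨e, rfl, rfl, h⟩ | ⟨e, rfl, rfl, h⟩)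
    exacts [⟨e.2.1, h⟩, ⟨e.2.1.symm, h⟩]
  · rintro ⟨huv, h⟩
    obtain ⟨e, ⟨rfl, rfl⟩ | ⟨rfl, rfl⟩⟩ := exists_gadgetEdge_of_adj huv
    exacts [Or.inl ⟨e, rfl, rfl, h⟩, Or.inr ⟨e, rfl, rfl, h⟩]

@[simp]
lemma edgeGadget_adj_inl_inr {u : V} {e : GadgetEdge G} {w : {w : W // w ≠ c ∧ w ≠ d}} :
    (edgeGadget G H c d).Adj (Sum.inl u) (Sum.inr (e, w)) ↔
      (u = e.1.1 ∧ H.Adj c w) ∨ (u = e.1.2 ∧ H.Adj d w) := by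
  simp only [edgeGadget, egBase, EGVert, Sum.inl.injEq, Sum.inr.injEq, Prod.mk.injEq,
    reduceCtorEq, false_and, and_false, exists_false, or_false, false_or]
  aesop

@[simp]
lemma edgeGadget_adj_inr_inr {e e' : GadgetEdge G} {w w' : {w : W // w ≠ c ∧ w ≠ d}} :
    (edgeGadget G H c d).Adj (Sum.inr (e, w)) (Sum.inr (e', w')) ↔ e = e' ∧ H.Adj w w' := by
  simp only [edgeGadget, egBase, EGVert, Sum.inr.injEq, Prod.mk.injEq, reduceCtorEq, false_and,
    exists_false, false_or]
  constructor
  · rintro (⟨_, _, _, ⟨rfl, rfl⟩, ⟨rfl, rfl⟩, h⟩ | ⟨_, _, _, ⟨rfl, rfl⟩, ⟨rfl, rfl⟩, h⟩)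
    exacts [⟨rfl, h⟩, ⟨rfl, h.symm⟩]
  · rintro ⟨rfl, h⟩
    exact Or.inl ⟨e, w, w', ⟨rfl, rfl⟩, ⟨rfl, rfl⟩, h⟩

@[simp]
lemma edgeGadget_adj_inr_inl {u : V} {e : GadgetEdge G} {w : {w : W // w ≠ c ∧ w ≠ d}} :
    (edgeGadget G H c d).Adj (Sum.inr (e, w)) (Sum.inl u) ↔
      (u = e.1.1 ∧ H.Adj w c) ∨ (u = e.1.2 ∧ H.Adj w d) := by
  rw [H.adj_comm _ c, H.adj_comm _ d]
  exact (adj_comm _ _ _).trans edgeGadget_adj_inl_inr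

variable (c d) in
lemma eq_or_eq_or_exists_interior (w : W) :
    w = c ∨ w = d ∨ ∃ w' : {w : W // w ≠ c ∧ w ≠ d}, w = w' := by
  by_cases hc : w = c
  · exact Or.inl hc
  by_cases hd : w = d
  · exact Or.inr (Or.inl hd)
  exact Or.inr (Or.inr ⟨⟨w, hc, hd⟩, rfl⟩)

variable (c d) in
open Classical in
noncomputable def gadgetVert (e : GadgetEdge G) (w : W) : EGVert G c d :=
  if hc : w = c then Sum.inl e.1.1
  else if hd : w = d then Sum.inl e.1.2
  else Sum.inr (e, ⟨w, hc, hd⟩)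

@[simp]
lemma gadgetVert_left (e : GadgetEdge G) : gadgetVert c d e c = Sum.inl e.1.1 :=
  dif_pos rfl

lemma gadgetVert_right (hcd : c ≠ d) (e : GadgetEdge G) :
    gadgetVert c d e d = Sum.inl e.1.2 :=
  (dif_neg hcd.symm).trans (dif_pos rfl)

@[simp]
lemma gadgetVert_interior (e : GadgetEdge G) (w : {w : W // w ≠ c ∧ w ≠ d}) :
    gadgetVert c d e w = Sum.inr (e, w) :=
  (dif_neg w.2.1).trans (dif_neg w.2.2)

lemma gadgetVert_injective (hcd : c ≠ d) (e : GadgetEdge G) :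
    Function.Injective (gadgetVert c d e) := by
  intro a b hab
  have hne : e.1.1 ≠ e.1.2 := e.2.2.ne
  rcases eq_or_eq_or_exists_interior c d a with ha | ha | ⟨a, rfl⟩ <;>
  rcases eq_or_eq_or_exists_interior c d b with hb | hb | ⟨b, rfl⟩ <;>
  simp_all [gadgetVert_right hcd, hne.symm]

lemma gadgetVert_adj_iff (hcd : c ≠ d) (e : GadgetEdge G) {a b : W} :
    (edgeGadget G H c d).Adj (gadgetVert c d e a) (gadgetVert c d e b) ↔ H.Adj a b := by
  have hne : e.1.1 ≠ e.1.2 := e.2.2.ne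
  rcases eq_or_eq_or_exists_interior c d a with ha | ha | ⟨a, rfl⟩ <;>
  rcases eq_or_eq_or_exists_interior c d b with hb | hb | ⟨b, rfl⟩ <;>
  simp_all [gadgetVert_right hcd, hne.symm, e.2.1, e.2.1.symm, H.adj_comm d c]

variable (H) in
noncomputable def gadgetEmbedding (hcd : c ≠ d) (e : GadgetEdge G) :
    H ↪g edgeGadget G H c d :=
  ⟨⟨gadgetVert c d e, gadgetVert_injective hcd e⟩, gadgetVert_adj_iff hcd e⟩

@[simp]
lemma gadgetEmbedding_apply (hcd : c ≠ d) (e : GadgetEdge G) (w : W) :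
    gadgetEmbedding H hcd e w = gadgetVert c d e w :=
  rfl

lemma exists_gadgetVert_mem_of_isFVS (hcd : c ≠ d) (hH : ¬ IsFVS H ∅)
    {U : Set (EGVert G c d)} (hU : IsFVS (edgeGadget G H c d) U) (e : GadgetEdge G) :
    ∃ w, gadgetVert c d e w ∈ U := by
  obtain ⟨v, p, hp⟩ : ∃ (v : W) (p : H.Walk v v), p.IsCycle := by
    simpa [isFVS_iff_forall_isCycle] using hH
  obtain ⟨x, hx, hxU⟩ := isFVS_iff_forall_isCycle.1 hU _ _
    (hp.map (f := (gadgetEmbedding H hcd e).toHom) (gadgetEmbedding H hcd e).injective)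
  rw [Walk.support_map, List.mem_map] at hx
  obtain ⟨w, -, rfl⟩ := hx
  exact ⟨w, hxU⟩

variable (c d) in
def gadgetInterior (e : GadgetEdge G) : Set (EGVert G c d) :=
  Set.range fun w => Sum.inr (e, w)

lemma mem_gadgetInterior_or_of_adj {e : GadgetEdge G} {x y : EGVert G c d}
    (hx : x ∈ gadgetInterior c d e) (h : (edgeGadget G H c d).Adj x y) :
    y ∈ gadgetInterior c d e ∨ y = Sum.inl e.1.1 ∨ y = Sum.inl e.1.2 := by
  obtain ⟨w, rfl⟩ := hx
  rcases y with u | ⟨e', w'⟩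
  · rcases edgeGadget_adj_inr_inl.1 h with ⟨rfl, -⟩ | ⟨rfl, -⟩ <;> simp
  · obtain ⟨rfl, -⟩ := edgeGadget_adj_inr_inr.1 h
    exact Or.inl ⟨w', rfl⟩

variable {U : Set (EGVert G c d)}

lemma exists_mem_gadgetInterior_of_isVertexCover
    (hU : _root_.IsVertexCover G {v | Sum.inl v ∈ U}) {v : EGVert G c d}
    {p : (edgeGadget G H c d).Walk v v} (hp : p.IsCycle)
    (hpU : ∀ x ∈ p.support, x ∉ U) : ∃ e, ∃ x ∈ p.support, x ∈ gadgetInterior c d e := by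
  by_contra! hinl
  have hleft : ∀ x ∈ p.support, ∃ u, x = Sum.inl u := by
    rintro (u | ⟨e, w⟩) hx
    exacts [⟨u, rfl⟩, (hinl e _ hx ⟨w, rfl⟩).elim]
  have hsnd := List.mem_of_mem_tail (p.snd_mem_tail_support hp.not_nil)
  obtain ⟨u, rfl⟩ := hleft v p.start_mem_support
  obtain ⟨u', hu'⟩ := hleft _ hsnd
  have hadj := p.adj_snd hp.not_nil
  rw [hu'] at hadj hsnd
  rcases hU (edgeGadget_adj_inl_inl.1 hadj).1 with h | h
  exacts [hpU _ p.start_mem_support h, hpU _ hsnd h]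

lemma exists_sole_exit_gadgetInterior (hU : _root_.IsVertexCover G {v | Sum.inl v ∈ U})
    (e : GadgetEdge G) : ∃ a, (a = e.1.1 ∨ a = e.1.2) ∧
      ∀ x ∈ gadgetInterior c d e, ∀ y ∈ Uᶜ, (edgeGadget G H c d).Adj x y →
        y ∈ gadgetInterior c d e ∨ y = Sum.inl a := by
  rcases hU e.2.1 with h | h
  · refine ⟨e.1.2, Or.inr rfl, fun x hx y hy hxy => ?_⟩
    rcases mem_gadgetInterior_or_of_adj hx hxy with h' | rfl | rfl
    exacts [Or.inl h', absurd h hy, Or.inr rfl]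
  · refine ⟨e.1.1, Or.inl rfl, fun x hx y hy hxy => ?_⟩
    rcases mem_gadgetInterior_or_of_adj hx hxy with h' | rfl | rfl
    exacts [Or.inl h', Or.inr rfl, absurd h hy]

lemma isFVS_of_isVertexCover (hcd : c ≠ d) (hc : IsFVS H {c}) (hd : IsFVS H {d})
    (hU : _root_.IsVertexCover G {v | Sum.inl v ∈ U}) : IsFVS (edgeGadget G H c d) U := by
  rw [isFVS_iff_forall_isCycle]
  intro v p hp
  by_contra! hpU
  obtain ⟨e, x, hxp, hx⟩ := exists_mem_gadgetInterior_of_isVertexCover hU hp hpU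
  obtain ⟨a, ha, hexit⟩ := exists_sole_exit_gadgetInterior (H := H) hU e
  have hsub :=
    hp.support_subset_insert (by rintro ⟨_, h⟩; exact Sum.inr_ne_inl h) hexit hpU hxp hx
  obtain ⟨u, q, hq, hqp⟩ := hp.exists_isCycle_of_support_subset_range (gadgetEmbedding H hcd e)
    fun z hz => by
      rcases hsub z hz with rfl | ⟨w, rfl⟩
      · rcases ha with rfl | rfl
        exacts [⟨c, gadgetVert_left e⟩, ⟨d, gadgetVert_right hcd e⟩]
      · exact ⟨w, gadgetVert_interior e w⟩
  obtain ⟨k, hk, rfl⟩ := isFVS_iff_forall_isCycle.1 hc _ q hq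
  obtain ⟨k', hk', rfl⟩ := isFVS_iff_forall_isCycle.1 hd _ q hq
  rcases hU e.2.1 with h | h
  · exact hpU _ (hqp _ hk) (by rw [gadgetEmbedding_apply, gadgetVert_left]; exact h)
  · exact hpU _ (hqp _ hk') (by rw [gadgetEmbedding_apply, gadgetVert_right hcd]; exact h)

def EGVert.collapse : EGVert G c d → V
  | .inl v => v
  | .inr (e, _) => e.1.1

lemma collapse_gadgetVert (hcd : c ≠ d) (e : GadgetEdge G) (w : W) :
    (gadgetVert c d e w).collapse = e.1.1 ∨ (gadgetVert c d e w).collapse = e.1.2 := by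
  rcases eq_or_eq_or_exists_interior c d w with rfl | rfl | ⟨w, rfl⟩
  · rw [gadgetVert_left]
    exact Or.inl rfl
  · rw [gadgetVert_right hcd]
    exact Or.inr rfl
  · rw [gadgetVert_interior]
    exact Or.inl rfl

lemma isVertexCover_of_forall_gadgetEdge {S : Set V}
    (h : ∀ e : GadgetEdge G, e.1.1 ∈ S ∨ e.1.2 ∈ S) : _root_.IsVertexCover G S := by
  intro u v huv
  obtain ⟨e, ⟨rfl, rfl⟩ | ⟨rfl, rfl⟩⟩ := exists_gadgetEdge_of_adj huv
  exacts [h e, (h e).symm]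

end EdgeGadget

theorem stmt_17 {V W : Type*} [LinearOrder V] (G : SimpleGraph V) (H : SimpleGraph W)
    (c d : W) (hcd : c ≠ d)
    (hc : IsFVS H {c}) (hd : IsFVS H {d}) (hH : ¬ IsFVS H (∅ : Set W))
    (Ustar : Finset (EGVert G c d)) (hUstar : IsFVS (edgeGadget G H c d) ↑Ustar) :
    ∃ U : Finset (EGVert G c d),
      U.card ≤ Ustar.card ∧
      IsFVS (edgeGadget G H c d) ↑U ∧
      (∀ x ∈ U, ∃ v : V, x = Sum.inl v) ∧
      _root_.IsVertexCover G {v : V | Sum.inl v ∈ U} := by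
  classical
  set U := Ustar.image (β := EGVert G c d) (fun x => Sum.inl x.collapse)
  have hcover : _root_.IsVertexCover G {v : V | Sum.inl v ∈ U} :=
    isVertexCover_of_forall_gadgetEdge fun e => by
      obtain ⟨w, hw⟩ := exists_gadgetVert_mem_of_isFVS hcd hH hUstar e
      have hmem := Finset.mem_image_of_mem (β := EGVert G c d) (fun x => Sum.inl x.collapse) hw
      rcases collapse_gadgetVert hcd e w with h | h <;> rw [h] at hmem
      exacts [Or.inl hmem, Or.inr hmem]
  refine ⟨U, Finset.card_image_le, isFVS_of_isVertexCover hcd hc hd hcover, ?_, hcover⟩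
  intro x hx
  obtain ⟨y, -, rfl⟩ := Finset.mem_image.1 hx
  exact ⟨_, rfl⟩
end

section
/- For every directed graph G, the generalized-sum/gadget composition identity holds for the standard directed-to-undirected Hamiltonian cycle reduction: if C* is an undirected Hamiltonian cycle of the image graph G* (vertices v_in, v_mid, v_out per vertex v; path edges {v_in,v_mid},{v_mid,v_out}; cross-edges {u_out, v_in} per directed edge (u,v)), then for every vertex v, C* uses both edges {v_in, v_mid} and {v_mid, v_out}, and hence C* traverses each vertex-gadget as the path v_in, v_mid, v_out or its reverse, and the cyclic sequence of gadgets traversed by C* yields a directed Hamiltonian cycle of G. -/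
open SimpleGraph

/-- A directed Hamiltonian cycle of the directed graph `R`: a cyclic enumeration of all
vertices following the edge directions. -/
def DirHamiltonian {V : Type*} [Fintype V] (R : V → V → Prop) : Prop :=
  ∃ f : ZMod (Fintype.card V) ≃ V, ∀ i, R (f i) (f (i + 1))

/-- `f` enumerates an undirected Hamiltonian cycle of `G`. -/
def IsHamCycleFn {V : Type*} [Fintype V] (G : SimpleGraph V)
    (f : ZMod (Fintype.card V) ≃ V) : Prop :=
  ∀ i, G.Adj (f i) (f (i + 1))

/-- The undirected graph `G` has a Hamiltonian cycle. -/
def Hamiltonian {V : Type*} [Fintype V] (G : SimpleGraph V) : Prop :=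
  ∃ f : ZMod (Fintype.card V) ≃ V, IsHamCycleFn G f

/-- Base (oriented) adjacency of the result of applying the node gadget with node graph `N`
and cross-edges `C` to the directed graph `R`. -/
def nodeApplyBase {V : Type*} {m : ℕ} (N : SimpleGraph (Fin m)) (C : Fin m → Fin m → Prop)
    (R : V → V → Prop) (x y : V × Fin m) : Prop :=
  (x.1 = y.1 ∧ N.Adj x.2 y.2) ∨ (R x.1 y.1 ∧ C x.2 y.2)

/-- Applying a node-gadget reduction (node graph `N`, cross-edges `C`) to a directed graph
`R`: each vertex is replaced by a copy of `N`, and each directed edge `(u,v)` induces the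
undirected edges `{i_u, j_v}` for every cross-edge `(i,j) ∈ C`. -/
def nodeApply {V : Type*} {m : ℕ} (N : SimpleGraph (Fin m)) (C : Fin m → Fin m → Prop)
    (R : V → V → Prop) : SimpleGraph (V × Fin m) where
  Adj x y := x ≠ y ∧ (nodeApplyBase N C R x y ∨ nodeApplyBase N C R y x)
  symm := ⟨fun x y h => ⟨h.1.symm, h.2.symm⟩⟩
  loopless := ⟨fun x h => h.1 rfl⟩

/-- The node gadget itself, as a graph on two copies of `Fin m`: two copies of the node
graph `N` plus the cross-edges `C` between the first and the second copy. -/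
def gadgetGraph {m : ℕ} (N : SimpleGraph (Fin m)) (C : Fin m → Fin m → Prop) :
    SimpleGraph (Fin m ⊕ Fin m) where
  Adj x y :=
    (∃ i j, N.Adj i j ∧ ((x = Sum.inl i ∧ y = Sum.inl j) ∨ (x = Sum.inr i ∧ y = Sum.inr j))) ∨
    (∃ i j, C i j ∧ ((x = Sum.inl i ∧ y = Sum.inr j) ∨ (x = Sum.inr j ∧ y = Sum.inl i)))
  symm := by
    constructor
    rintro x y (⟨i, j, h, ⟨rfl, rfl⟩ | ⟨rfl, rfl⟩⟩ | ⟨i, j, h, ⟨rfl, rfl⟩ | ⟨rfl, rfl⟩⟩)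
    · exact Or.inl ⟨j, i, h.symm, Or.inl ⟨rfl, rfl⟩⟩
    · exact Or.inl ⟨j, i, h.symm, Or.inr ⟨rfl, rfl⟩⟩
    · exact Or.inr ⟨i, j, h, Or.inr ⟨rfl, rfl⟩⟩
    · exact Or.inr ⟨i, j, h, Or.inl ⟨rfl, rfl⟩⟩
  loopless := by
    constructor
    rintro x (⟨i, j, h, ⟨h1, h2⟩ | ⟨h1, h2⟩⟩ | ⟨i, j, h, ⟨h1, h2⟩ | ⟨h1, h2⟩⟩) <;>
      subst h1 <;> simp_all

/-- The standard node gadget for reducing directed to undirected Hamiltonian cycle: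
the node graph is the path `in — mid — out` (`pathGraph 3`) and the only cross-edge goes
from `out` (index 2) to `in` (index 0). -/
def stdHCGadget {V : Type*} (R : V → V → Prop) : SimpleGraph (V × Fin 3) :=
  nodeApply (pathGraph 3) (fun i j => i = 2 ∧ j = 0) R

/-!
A vertex `(v, 1)` has only the two neighbours `(v, 0)` and `(v, 2)`, so on a Hamiltonian cycle it
sits between them and every gadget is traversed in one piece, forwards or backwards. After
reversing the cycle if necessary, some gadget is traversed forwards; the only way to leave its
`out` vertex is a cross-edge `(v, 2) — (w, 0)` with `R v w`, and the next gadget is then again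
traversed forwards. So the cycle reads gadget after gadget, three positions each, and the
gadgets met at positions `0, 3, 6, …` form a directed Hamiltonian cycle of `R`.
-/

namespace ZMod

lemma two_ne_zero_of_three_le {n : ℕ} (hn : 3 ≤ n) : (2 : ZMod n) ≠ 0 := by
  rw [← Nat.cast_ofNat, Ne, natCast_eq_zero_iff]
  exact fun h => absurd (Nat.le_of_dvd two_pos h) (by omega)

lemma natCast_mul_val_add_one {N m n : ℕ} [NeZero n] (hN : N = m * n) (k : ZMod n) :
    ((m * (k + 1).val : ℕ) : ZMod N) = ((m * k.val : ℕ) : ZMod N) + m := by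
  subst hN
  have hval : (k + 1).val ≡ k.val + 1 [MOD n] := by
    rw [← natCast_eq_natCast_iff]
    push_cast [natCast_zmod_val]
    rfl
  rw [(natCast_eq_natCast_iff _ _ _).2 (hval.mul_left' m)]
  push_cast
  ring

lemma natCast_mul_val_injective {N m n : ℕ} [NeZero n] (hN : N = m * n) (hm : m ≠ 0) :
    Function.Injective fun k : ZMod n => ((m * k.val : ℕ) : ZMod N) := by
  intro a b hab
  subst hN
  have hval : a.val ≡ b.val [MOD n] :=
    Nat.ModEq.mul_left_cancel' hm ((natCast_eq_natCast_iff _ _ _).1 hab)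
  simpa only [natCast_zmod_val] using (natCast_eq_natCast_iff _ _ _).2 hval

end ZMod

namespace IsHamCycleFn

variable {α : Type*} [Fintype α] {G : SimpleGraph α} {f : ZMod (Fintype.card α) ≃ α}

lemma shift (hf : IsHamCycleFn G f) (c : ZMod (Fintype.card α)) :
    IsHamCycleFn G ((Equiv.addRight c).trans f) := fun j => by
  simpa only [Equiv.trans_apply, Equiv.coe_addRight, add_right_comm] using hf (j + c)

lemma reverse (hf : IsHamCycleFn G f) (c : ZMod (Fintype.card α)) :
    IsHamCycleFn G ((Equiv.subLeft c).trans f) := fun j => by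
  have h := (hf (c - (j + 1))).symm
  rwa [show c - (j + 1) + 1 = c - j by ring] at h

end IsHamCycleFn

section StdHCGadget

variable {V : Type*} {R : V → V → Prop}

lemma stdHCGadget_adj_mid {v : V} {x : V × Fin 3} (h : (stdHCGadget R).Adj (v, 1) x) :
    x = (v, 0) ∨ x = (v, 2) := by
  obtain ⟨w, b⟩ := x
  obtain ⟨-, h | h⟩ := h <;> fin_cases b <;> simp_all [nodeApplyBase, pathGraph_adj, eq_comm]

lemma stdHCGadget_adj_out {v : V} {x : V × Fin 3} (h : (stdHCGadget R).Adj (v, 2) x) :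
    x = (v, 1) ∨ ∃ w, R v w ∧ x = (w, 0) := by
  obtain ⟨w, b⟩ := x
  obtain ⟨-, h | h⟩ := h <;> fin_cases b <;> simp_all [nodeApplyBase, pathGraph_adj, eq_comm]

end StdHCGadget

def TraversesForward {N : ℕ} {V : Type*} (f : ZMod N → V × Fin 3) (i : ZMod N) (v : V) :
    Prop :=
  f i = (v, 0) ∧ f (i + 1) = (v, 1) ∧ f (i + 2) = (v, 2)

namespace IsHamCycleFn

variable {V : Type*} [Fintype V] {R : V → V → Prop}
  {f : ZMod (Fintype.card (V × Fin 3)) ≃ V × Fin 3}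

lemma pred_succ_of_eq_mid (hf : IsHamCycleFn (stdHCGadget R) f)
    (hcard : 3 ≤ Fintype.card (V × Fin 3))
    {i : ZMod (Fintype.card (V × Fin 3))} {v : V} (hi : f i = (v, 1)) :
    (f (i - 1) = (v, 0) ∧ f (i + 1) = (v, 2)) ∨ (f (i - 1) = (v, 2) ∧ f (i + 1) = (v, 0)) := by
  have hsucc := stdHCGadget_adj_mid (hi ▸ hf i)
  have hpred : f (i - 1) = (v, 0) ∨ f (i - 1) = (v, 2) :=
    stdHCGadget_adj_mid (R := R) <| by simpa only [sub_add_cancel, hi] using (hf (i - 1)).symm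
  have hne : f (i - 1) ≠ f (i + 1) := f.injective.ne fun h =>
    ZMod.two_ne_zero_of_three_le hcard (by linear_combination -h)
  rcases hpred with hp | hp <;> rcases hsucc with hs | hs
  exacts [absurd (hp.trans hs.symm) hne, Or.inl ⟨hp, hs⟩, Or.inr ⟨hp, hs⟩,
    absurd (hp.trans hs.symm) hne]

lemma exists_traversesForward_or_backward (hf : IsHamCycleFn (stdHCGadget R) f)
    (hcard : 3 ≤ Fintype.card (V × Fin 3)) (v : V) :
    ∃ i, TraversesForward f i v ∨
      (f i = (v, 2) ∧ f (i + 1) = (v, 1) ∧ f (i + 2) = (v, 0)) := by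
  have hi := f.apply_symm_apply (v, 1)
  refine ⟨f.symm (v, 1) - 1, ?_⟩
  unfold TraversesForward
  rw [sub_add_cancel, show f.symm (v, 1) - 1 + 2 = f.symm (v, 1) + 1 by ring, hi]
  rcases hf.pred_succ_of_eq_mid hcard hi with ⟨hp, hs⟩ | ⟨hp, hs⟩
  exacts [Or.inl ⟨hp, rfl, hs⟩, Or.inr ⟨hp, rfl, hs⟩]

lemma traversesForward_add_three (hf : IsHamCycleFn (stdHCGadget R) f)
    (hcard : 3 ≤ Fintype.card (V × Fin 3))
    {i : ZMod (Fintype.card (V × Fin 3))} {v : V} (h : TraversesForward f i v) :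
    ∃ w, R v w ∧ TraversesForward f (i + 3) w := by
  obtain ⟨-, h1, h2⟩ := h
  have hout := hf (i + 2)
  rw [h2, show i + 2 + 1 = i + 3 by ring] at hout
  obtain h3 | ⟨w, hvw, h3⟩ := stdHCGadget_adj_out hout
  · exact absurd (f.injective (h3.trans h1.symm))
      fun h => ZMod.two_ne_zero_of_three_le hcard (by linear_combination h)
  have hj := f.apply_symm_apply (w, 1)
  rcases hf.pred_succ_of_eq_mid hcard hj with ⟨hp, hs⟩ | ⟨-, hs⟩
  · have hj4 : f.symm (w, 1) = i + 4 := by linear_combination f.injective (hp.trans h3.symm)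
    rw [hj4] at hj hs
    refine ⟨w, hvw, h3, ?_, ?_⟩
    · rwa [show i + 3 + 1 = i + 4 by ring]
    · rwa [show i + 3 + 2 = i + 4 + 1 by ring]
  · have hj2 : f.symm (w, 1) = i + 2 := by linear_combination f.injective (hs.trans h3.symm)
    rw [hj2, h2] at hj
    simp at hj

lemma traversesForward_natCast_three_mul (hf : IsHamCycleFn (stdHCGadget R) f)
    (hcard : 3 ≤ Fintype.card (V × Fin 3)) {v : V} (h0 : TraversesForward f 0 v) (k : ℕ) :
    TraversesForward f ((3 * k : ℕ) : ZMod _) (f ((3 * k : ℕ) : ZMod _)).1 := by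
  induction k with
  | zero => simpa [h0.1] using h0
  | succ k ih =>
    obtain ⟨w, -, hw⟩ := hf.traversesForward_add_three hcard ih
    have hpos : ((3 * (k + 1) : ℕ) : ZMod (Fintype.card (V × Fin 3))) = (3 * k : ℕ) + 3 := by
      push_cast; ring
    rwa [hpos, hw.1]

lemma dirHamiltonian_of_traversesForward_zero (hf : IsHamCycleFn (stdHCGadget R) f)
    {v : V} (h0 : TraversesForward f 0 v) : DirHamiltonian R := by
  have hcard : Fintype.card (V × Fin 3) = 3 * Fintype.card V := by
    rw [Fintype.card_prod, Fintype.card_fin, mul_comm]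
  have : NeZero (Fintype.card V) := ⟨@Fintype.card_ne_zero V _ ⟨v⟩⟩
  have hcard3 : 3 ≤ Fintype.card (V × Fin 3) := by
    have := NeZero.pos (Fintype.card V); omega
  set pos : ZMod (Fintype.card V) → ZMod (Fintype.card (V × Fin 3)) :=
    fun k => ((3 * k.val : ℕ) : ZMod _)
  have hgadget (k : ZMod (Fintype.card V)) := hf.traversesForward_natCast_three_mul hcard3 h0 k.val
  set g : ZMod (Fintype.card V) → V := fun k => (f (pos k)).1
  have hg_inj : g.Injective := fun a b hab =>
    ZMod.natCast_mul_val_injective hcard three_ne_zero <| f.injective <|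
      (hgadget a).1.trans ((congrArg (·, 0) hab).trans (hgadget b).1.symm)
  refine ⟨Equiv.ofBijective g
    ((Fintype.bijective_iff_injective_and_card g).2 ⟨hg_inj, by simp⟩), fun k => ?_⟩
  obtain ⟨w, hvw, hw⟩ := hf.traversesForward_add_three hcard3 (hgadget k)
  have hpos : pos (k + 1) = pos k + 3 := by
    simpa [pos] using ZMod.natCast_mul_val_add_one hcard k
  show R (f (pos k)).1 (f (pos (k + 1))).1
  rwa [hpos, hw.1]

end IsHamCycleFn

theorem stmt_19_general {V : Type*} [Fintype V] (R : V → V → Prop)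
    (f : ZMod (Fintype.card (V × Fin 3)) ≃ V × Fin 3)
    (hf : IsHamCycleFn (stdHCGadget R) f) :
    (∀ v : V, (∃ i, (f i = (v, 0) ∧ f (i + 1) = (v, 1)) ∨ (f i = (v, 1) ∧ f (i + 1) = (v, 0))) ∧
      (∃ i, (f i = (v, 1) ∧ f (i + 1) = (v, 2)) ∨ (f i = (v, 2) ∧ f (i + 1) = (v, 1)))) ∧
    (∀ v : V, ∃ i,
      (f i = (v, 0) ∧ f (i + 1) = (v, 1) ∧ f (i + 2) = (v, 2)) ∨
      (f i = (v, 2) ∧ f (i + 1) = (v, 1) ∧ f (i + 2) = (v, 0))) ∧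
    DirHamiltonian R := by
  have hcard : 3 ≤ Fintype.card (V × Fin 3) := by
    have : 0 < Fintype.card V := @Fintype.card_pos V _ ⟨(f 0).1⟩
    rw [Fintype.card_prod, Fintype.card_fin]; omega
  have htrav := hf.exists_traversesForward_or_backward hcard
  refine ⟨fun v => ?_, htrav, ?_⟩
  · obtain ⟨i, ⟨ha, hb, hc⟩ | ⟨ha, hb, hc⟩⟩ := htrav v <;>
      rw [show i + 2 = i + 1 + 1 by ring] at hc
    · exact ⟨⟨i, .inl ⟨ha, hb⟩⟩, ⟨i + 1, .inl ⟨hb, hc⟩⟩⟩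
    · exact ⟨⟨i + 1, .inr ⟨hb, hc⟩⟩, ⟨i, .inr ⟨ha, hb⟩⟩⟩
  · obtain ⟨i, ⟨h0, h1, h2⟩ | ⟨h2, h1, h0⟩⟩ := htrav (f 0).1
    · refine (hf.shift i).dirHamiltonian_of_traversesForward_zero
        (v := (f 0).1) ⟨?_, ?_, ?_⟩ <;> simpa [add_comm]
    · refine (hf.reverse (i + 2)).dirHamiltonian_of_traversesForward_zero
        (v := (f 0).1) ⟨?_, ?_, ?_⟩
      · simpa using h0
      · simpa [show i + 2 - 1 = i + 1 by ring] using h1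
      · simpa using h2

theorem stmt_19 {V : Type*} [Fintype V] (R : V → V → Prop) (hloopless : ∀ v, ¬ R v v)
    (f : ZMod (Fintype.card (V × Fin 3)) ≃ V × Fin 3)
    (hf : IsHamCycleFn (stdHCGadget R) f) :
    (∀ v : V, (∃ i, (f i = (v, 0) ∧ f (i + 1) = (v, 1)) ∨ (f i = (v, 1) ∧ f (i + 1) = (v, 0))) ∧
      (∃ i, (f i = (v, 1) ∧ f (i + 1) = (v, 2)) ∨ (f i = (v, 2) ∧ f (i + 1) = (v, 1)))) ∧
    (∀ v : V, ∃ i,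
      (f i = (v, 0) ∧ f (i + 1) = (v, 1) ∧ f (i + 2) = (v, 2)) ∨
      (f i = (v, 2) ∧ f (i + 1) = (v, 1) ∧ f (i + 2) = (v, 0))) ∧
    DirHamiltonian R :=
  stmt_19_general R f hf
end
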